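/- arXiv:1612.02132 — 2 statements merged into one kernel-verified Lean document; each statement's English description precedes it below -/
import Mathlib

section
/- Let p be a prime, T ≤ Σ_{p+1} the cyclic subgroup of order p generated by the p-cycle (1 2 … p), and N = N_{Σ_{p+1}}(T) its normalizer. Let V = F_p^{p+1}/Δ be the natural module (Δ the constant vectors). Then the fixed-point subspace C_V(N) is one-dimensional over F_p. -/
/-- The inclusion `Fin p ≃ {j : Fin (p+1) // j < p}`. -/
def finIncl (p : ℕ) : Fin p ≃ {j : Fin (p + 1) // (j : ℕ) < p} where
  toFun i := ⟨⟨i.1, Nat.lt_succ_of_lt i.2⟩, i.2⟩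
  invFun j := ⟨j.1.1, j.2⟩
  left_inv i := rfl
  right_inv j := rfl

/-- The `p`-cycle `(1 2 … p)` in `Σ_{p+1}`, cyclically rotating the first `p`
letters and fixing the last one. -/
def pCycle (p : ℕ) : Equiv.Perm (Fin (p + 1)) :=
  (finRotate p).extendDomain (finIncl p)

lemma pCycle_eq (n : ℕ) : pCycle (n+1) = (Equiv.addRight (1 : Fin (n+1))).extendDomain (finIncl (n+1)) := by
  unfold pCycle
  congr 1
  ext i
  simp [Equiv.addRight]

lemma pCycle_apply_lt (n m : ℕ) (hm : m < n + 1) :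
    pCycle (n+1) ⟨m, Nat.lt_succ_of_lt hm⟩ =
      ⟨((⟨m, hm⟩ : Fin (n+1)) + 1 : Fin (n+1)).1, Nat.lt_succ_of_lt (Fin.is_lt _)⟩ := by
  rw [pCycle_eq]
  have := Equiv.Perm.extendDomain_apply_subtype (Equiv.addRight (1 : Fin (n+1))) (finIncl (n+1))
    (b := ⟨m, Nat.lt_succ_of_lt hm⟩) hm
  rw [this]
  rfl

lemma pCycle_apply_last (n : ℕ) :
    pCycle (n+1) ⟨n+1, Nat.lt_succ_self _⟩ = ⟨n+1, Nat.lt_succ_self _⟩ := by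
  rw [pCycle_eq]
  exact Equiv.Perm.extendDomain_apply_not_subtype _ _ (by simp)

lemma pCycle_fix (n : ℕ) (t : Equiv.Perm (Fin (n+2)))
    (ht : t ∈ Subgroup.zpowers (pCycle (n+1))) (ht1 : t ≠ 1)
    (x : Fin (n+2)) (hx : t x = x) : (x : ℕ) = n+1 := by
  obtain ⟨j, rfl⟩ := ht
  simp only [pCycle_eq, ← Equiv.Perm.extendDomain_zpow] at hx ht1
  by_contra hxp
  have hxlt : (x : ℕ) < n + 1 := lt_of_le_of_ne (Nat.lt_succ_iff.mp x.2) hxp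
  rw [Equiv.Perm.extendDomain_apply_subtype (Equiv.addRight (1 : Fin (n+1)) ^ j) (finIncl (n+1)) (b := x) hxlt] at hx
  have hfix : (Equiv.addRight (1 : Fin (n+1)) ^ j) ((finIncl (n+1)).symm ⟨x, hxlt⟩)
      = (finIncl (n+1)).symm ⟨x, hxlt⟩ := by
    apply (finIncl (n+1)).injective
    apply Subtype.ext
    simpa using hx
  have hzp : ∀ j : ℤ, (Equiv.addRight (1 : Fin (n+1)) ^ j) = Equiv.addRight (j • (1 : Fin (n+1))) := by
    intro j
    induction j using Int.induction_on with
    | zero => refine Equiv.ext fun y => ?_; simp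
    | succ k ih =>
      rw [zpow_add_one, ih]; refine Equiv.ext fun y => ?_
      simp [add_smul, add_assoc]; exact add_comm _ _
    | pred k ih =>
      rw [zpow_sub_one, ih]; refine Equiv.ext fun y => ?_
      simp [sub_smul]; abel
  rw [hzp] at hfix ht1
  have : (j • (1 : Fin (n+1))) = 0 := by
    have := congrArg (fun y => y - (finIncl (n+1)).symm ⟨x, hxlt⟩) hfix
    simpa [Equiv.addRight] using this
  rw [this] at ht1
  exact ht1 (by rw [Equiv.addRight_zero, Equiv.Perm.extendDomain_one])

/-- Let `T = ⟨(1 2 … p)⟩ ≤ Σ_{p+1}`, `N` its normalizer, and `V = F_p^{p+1}/Δ` the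
natural module. Then the fixed-point space `C_V(N)` is one-dimensional over `F_p`. -/
theorem stmt11 (p : ℕ) [Fact p.Prime] :
    ∃ v : Fin (p + 1) → ZMod p,
      (∀ σ ∈ Subgroup.normalizer (Subgroup.zpowers (pCycle p) : Set (Equiv.Perm (Fin (p + 1)))),
          ((fun i => v (σ⁻¹ i)) - v) ∈
            Submodule.span (ZMod p) ({fun _ => 1} : Set (Fin (p + 1) → ZMod p))) ∧
      v ∉ Submodule.span (ZMod p) ({fun _ => 1} : Set (Fin (p + 1) → ZMod p)) ∧
      ∀ w : Fin (p + 1) → ZMod p,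
        (∀ σ ∈ Subgroup.normalizer (Subgroup.zpowers (pCycle p) : Set (Equiv.Perm (Fin (p + 1)))),
            ((fun i => w (σ⁻¹ i)) - w) ∈
              Submodule.span (ZMod p) ({fun _ => 1} : Set (Fin (p + 1) → ZMod p))) →
          ∃ a : ZMod p,
            (w - a • v) ∈
              Submodule.span (ZMod p) ({fun _ => 1} : Set (Fin (p + 1) → ZMod p)) := by
  have hp : p.Prime := Fact.out
  obtain ⟨n, rfl⟩ : ∃ n, p = n + 1 := ⟨p - 1, (Nat.succ_pred_eq_of_pos hp.pos).symm⟩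
  have hn1 : 1 < n + 1 := hp.one_lt
  set c : Equiv.Perm (Fin (n + 2)) := pCycle (n + 1) with hc
  set last : Fin (n + 2) := ⟨n + 1, Nat.lt_succ_self _⟩ with hlast
  -- c ≠ 1
  have h01 : c ⟨0, Nat.succ_pos _⟩ = ⟨1, Nat.lt_succ_of_lt hn1⟩ := by
    rw [hc, pCycle_apply_lt n 0 (Nat.succ_pos n)]
    apply Fin.ext
    simp [Fin.add_def, Nat.mod_eq_of_lt hn1]
  have hc1 : c ≠ 1 := by
    intro h
    rw [h] at h01
    simp at h01
  have hclast : c last = last := pCycle_apply_last n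
  -- every element of the normalizer fixes `last`
  have hNfix : ∀ σ ∈ Subgroup.normalizer (Subgroup.zpowers c : Set (Equiv.Perm (Fin (n + 2)))), σ last = last := by
    intro σ hσ
    have ht : σ * c * σ⁻¹ ∈ Subgroup.zpowers c :=
      (Subgroup.mem_normalizer_iff.mp hσ c).mp (Subgroup.mem_zpowers c)
    have ht1 : σ * c * σ⁻¹ ≠ 1 := by
      intro h
      apply hc1
      have : c = σ⁻¹ * (σ * c * σ⁻¹) * σ := by group
      rw [h] at this
      simpa using this
    have hfix : (σ * c * σ⁻¹) (σ last) = σ last := by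
      simp [Equiv.Perm.mul_apply, hclast]
    have := pCycle_fix n _ ht ht1 _ hfix
    exact Fin.ext this
  refine ⟨fun i => if i = last then 1 else 0, ?_, ?_, ?_⟩
  · intro σ hσ
    have h1 : σ last = last := hNfix σ hσ
    have h2 : σ⁻¹ last = last := by
      conv_lhs => rw [← h1]
      simp
    have : ((fun i => (if σ⁻¹ i = last then (1 : ZMod (n+1)) else 0)) -
        fun i => if i = last then 1 else 0) = 0 := by
      funext i
      have hiff : σ⁻¹ i = last ↔ i = last := by
        constructor
        · intro h; have := congrArg σ h; simpa [h1] using this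
        · intro h; rw [h]; exact h2
      simp [Pi.sub_apply, hiff, show σ.symm i = last ↔ i = last from hiff]
    rw [this]
    exact Submodule.zero_mem _
  · rw [Submodule.mem_span_singleton]
    rintro ⟨a, ha⟩
    have h0 := congrFun ha ⟨0, Nat.succ_pos _⟩
    have hl := congrFun ha last
    have hne : (⟨0, Nat.succ_pos _⟩ : Fin (n + 2)) ≠ last := by
      intro h
      have := congrArg Fin.val h
      simp [hlast] at this
    simp [hne] at h0
    simp at hl
    rw [h0] at hl
    exact one_ne_zero hl.symm
  · intro w hw
    have hcN : c ∈ Subgroup.normalizer (Subgroup.zpowers c : Set (Equiv.Perm (Fin (n + 2)))) :=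
      Subgroup.le_normalizer (Subgroup.mem_zpowers c)
    obtain ⟨a, ha⟩ := Submodule.mem_span_singleton.mp (hw c hcN)
    have hcinv : c⁻¹ last = last := by
      conv_lhs => rw [← hclast]
      simp
    have ha0 : a = 0 := by
      have := congrFun ha last
      simp [Pi.sub_apply, hcinv, show c.symm last = last from hcinv] at this
      exact this
    have hfixall : ∀ i, w (c⁻¹ i) = w i := by
      intro i
      have := congrFun ha i
      rw [ha0] at this
      have h := this
      simp [Pi.sub_apply] at h
      exact sub_eq_zero.mp h.symm
    have hstepall : ∀ i, w (c i) = w i := by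
      intro i
      have h := hfixall (c i)
      simp at h
      exact h.symm
    have hconst : ∀ m (hm : m < n + 1), w ⟨m, Nat.lt_succ_of_lt hm⟩ = w ⟨0, Nat.succ_pos _⟩ := by
      intro m
      induction m with
      | zero => intro _; rfl
      | succ k ih =>
        intro hm
        have hk : k < n + 1 := Nat.lt_of_succ_lt hm
        have hck : c ⟨k, Nat.lt_succ_of_lt hk⟩ = ⟨k + 1, Nat.lt_succ_of_lt hm⟩ := by
          rw [hc, pCycle_apply_lt n k hk]
          apply Fin.ext
          simp [Fin.add_def, Nat.mod_eq_of_lt hm]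
        rw [← hck, hstepall, ih hk]
    refine ⟨w last - w ⟨0, Nat.succ_pos _⟩, Submodule.mem_span_singleton.mpr
      ⟨w ⟨0, Nat.succ_pos _⟩, ?_⟩⟩
    funext i
    by_cases h : i = last
    · subst h
      simp [Pi.sub_apply]
    · have hlt : (i : ℕ) < n + 1 := by
        have := i.2
        have : (i : ℕ) ≠ n + 1 := fun he => h (Fin.ext he)
        omega
      have : w i = w ⟨0, Nat.succ_pos _⟩ := by
        have := hconst i.1 hlt
        convert this using 2
      simp [Pi.sub_apply, h, this]
end

section
/- Let G = Γ ≀ C_p with base group G₀ = Γ^p. Let P ≤ G be a subgroup, set P₀ = P ∩ G₀, let P_i ≤ Γ (for 1 ≤ i ≤ p) be the image of P₀ under projection to the i-th coordinate, and set P̄ = P₁ × ⋯ × P_p ≤ G₀. Then every element of N_G(P) normalizes P̄; in particular P·P̄ is a subgroup of G and N_{P P̄}(P) is normal in N_G(P). -/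
/-- The automorphism of `ZMod p → Γ` shifting coordinates by `k`. -/
def shiftAut (p : ℕ) (Γ : Type*) [Group Γ] (k : ZMod p) : (ZMod p → Γ) ≃* (ZMod p → Γ) where
  toFun f := fun i => f (i + k)
  invFun f := fun i => f (i - k)
  left_inv f := by funext i; simp
  right_inv f := by funext i; simp
  map_mul' f g := rfl

/-- The action of the cyclic group `C_p` on the base group `Γ^p` of the wreath
product `Γ ≀ C_p`, by cyclic permutation of the coordinates. -/
def cShift (p : ℕ) (Γ : Type*) [Group Γ] : Multiplicative (ZMod p) →* MulAut (ZMod p → Γ) where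
  toFun k := shiftAut p Γ k.toAdd
  map_one' := by
    ext f i
    simp [shiftAut]
  map_mul' k l := by
    ext f i
    simp [shiftAut, add_assoc]



open Pointwise SemidirectProduct

lemma conj_inl (p : ℕ) (Γ : Type*) [Group Γ]
    (g : (ZMod p → Γ) ⋊[cShift p Γ] Multiplicative (ZMod p)) (a : ZMod p → Γ) :
    g * SemidirectProduct.inl a * g⁻¹ =
      SemidirectProduct.inl
        (fun i => g.left i * a (i + Multiplicative.toAdd g.right) * (g.left i)⁻¹) := by
  ext i
  · erw [SemidirectProduct.mul_left, SemidirectProduct.mul_left, SemidirectProduct.left_inl, SemidirectProduct.left_inl, SemidirectProduct.inv_left, SemidirectProduct.mul_right, SemidirectProduct.right_inl]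
    simp [cShift, shiftAut, mul_assoc]
    rfl
  · simp

lemma mem_map_inl (p : ℕ) (Γ : Type*) [Group Γ] {S : Subgroup (ZMod p → Γ)}
    {h : (ZMod p → Γ) ⋊[cShift p Γ] Multiplicative (ZMod p)} :
    h ∈ S.map (inl : _ →* (ZMod p → Γ) ⋊[cShift p Γ] Multiplicative (ZMod p)) ↔
      h.right = 1 ∧ h.left ∈ S := by
  constructor
  · rintro ⟨a, ha, rfl⟩; exact ⟨rfl, ha⟩
  · rintro ⟨h1, h2⟩; exact ⟨h.left, h2, by ext <;> simp [h1]⟩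


open Pointwise SemidirectProduct in
/-- Let `G = Γ ≀ C_p` with base group `G₀ = Γ^p`, `P ≤ G`, `P₀ = P ∩ G₀`, `P_i` the
image of `P₀` in the `i`-th coordinate, and `P̄ = P₁ × ⋯ × P_p ≤ G₀`. Then every
element of `N_G(P)` normalizes `P̄`; in particular `P·P̄` is a subgroup of `G` and
`N_{P·P̄}(P)` is normal in `N_G(P)`. -/
theorem stmt14 (p : ℕ) [Fact p.Prime] (Γ : Type*) [Group Γ] [Finite Γ]
    (P : Subgroup ((ZMod p → Γ) ⋊[cShift p Γ] Multiplicative (ZMod p))) :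
    let G := (ZMod p → Γ) ⋊[cShift p Γ] Multiplicative (ZMod p)
    let P₀ : Subgroup (ZMod p → Γ) := Subgroup.comap (inl : (ZMod p → Γ) →* G) P
    let Pbar : Subgroup G :=
      Subgroup.map (inl : (ZMod p → Γ) →* G)
        (Subgroup.pi Set.univ fun i =>
          Subgroup.map (Pi.evalMonoidHom (fun _ : ZMod p => Γ) i) P₀)
    Subgroup.normalizer (P : Set G) ≤ Subgroup.normalizer (Pbar : Set G) ∧
      ((P : Set G) * (Pbar : Set G)) = ((P ⊔ Pbar : Subgroup G) : Set G) ∧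
      (((P ⊔ Pbar) ⊓ Subgroup.normalizer (P : Set G)).subgroupOf (Subgroup.normalizer (P : Set G))).Normal := by
  intro G P₀ Pbar
  set Pi' : ZMod p → Subgroup Γ :=
    fun i => Subgroup.map (Pi.evalMonoidHom (fun _ : ZMod p => Γ) i) P₀ with hPi'
  -- main claim
  have h1 : Subgroup.normalizer (P : Set G) ≤ Subgroup.normalizer (Pbar : Set G) := by
    intro g hg
    rw [Subgroup.mem_normalizer_iff] at hg ⊢
    set k := Multiplicative.toAdd g.right with hk
    have hP0 : ∀ a : ZMod p → Γ,
        a ∈ P₀ ↔ (fun i => g.left i * a (i + k) * (g.left i)⁻¹) ∈ P₀ := by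
      intro a
      have : (inl a : G) ∈ P ↔ g * inl a * g⁻¹ ∈ P := hg (inl a)
      rw [conj_inl] at this
      exact this
    have hPi : ∀ (i : ZMod p) (x : Γ),
        x ∈ Pi' (i + k) ↔ g.left i * x * (g.left i)⁻¹ ∈ Pi' i := by
      intro i x
      constructor
      · rintro ⟨a, ha, rfl⟩
        exact ⟨fun j => g.left j * a (j + k) * (g.left j)⁻¹, (hP0 a).1 ha, rfl⟩
      · rintro ⟨b, hb, hbi⟩
        rw [SetLike.mem_coe] at hb
        refine ⟨fun j => (g.left (j - k))⁻¹ * b (j - k) * (g.left (j - k)), ?_, ?_⟩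
        · rw [SetLike.mem_coe, hP0]
          have : (fun i => g.left i *
              ((fun j => (g.left (j - k))⁻¹ * b (j - k) * (g.left (j - k))) (i + k)) *
              (g.left i)⁻¹) = b := by
            funext j
            simp [mul_assoc]
          rw [this]
          exact hb
        · have hb' : b i = g.left i * x * (g.left i)⁻¹ := hbi
          show (g.left (i + k - k))⁻¹ * b (i + k - k) * g.left (i + k - k) = x
          simp [hb', mul_assoc]
    intro h
    have hmem : ∀ h' : G, h' ∈ Pbar ↔ h'.right = 1 ∧ ∀ i, h'.left i ∈ Pi' i := by
      intro h'
      rw [show Pbar = (Subgroup.pi Set.univ Pi').map inl from rfl, mem_map_inl]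
      simp [Subgroup.mem_pi]
    rw [hmem, hmem]
    constructor
    · rintro ⟨hr, hl⟩
      have hh : h = inl h.left := by ext <;> simp [hr]
      rw [hh, conj_inl]
      exact ⟨rfl, fun i => (hPi i (h.left (i + k))).1 (hl (i + k))⟩
    · rintro ⟨hr, hl⟩
      have hr' : h.right = 1 := by
        have hcomm : (g * h * g⁻¹).right = h.right := by
          erw [SemidirectProduct.mul_right, SemidirectProduct.mul_right, SemidirectProduct.inv_right]
          rw [mul_right_comm, mul_inv_cancel, one_mul]
        rw [hcomm] at hr; exact hr
      refine ⟨hr', fun j => ?_⟩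
      have hh : h = inl h.left := by ext <;> simp [hr']
      rw [hh, conj_inl] at hl
      have := (hPi (j - k) (h.left (j - k + k))).2 (hl (j - k))
      simpa using this
  have hPn : P ≤ Subgroup.normalizer (Pbar : Set G) := le_trans Subgroup.le_normalizer h1
  have hconj : ∀ x ∈ P, ∀ b ∈ Pbar, x * b * x⁻¹ ∈ Pbar := fun x hx b hb =>
    ((Subgroup.mem_normalizer_iff.mp (hPn hx)) b).mp hb
  have h2 : ((P : Set G) * (Pbar : Set G)) = ((P ⊔ Pbar : Subgroup G) : Set G) := by
    have Kmul : ∀ {x y : G}, x ∈ (P : Set G) * Pbar → y ∈ (P : Set G) * Pbar →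
        x * y ∈ (P : Set G) * Pbar := by
      rintro _ _ ⟨x, hx, b, hb, rfl⟩ ⟨y, hy, c, hc, rfl⟩
      refine ⟨x * y, mul_mem hx hy, (y⁻¹ * b * y) * c, mul_mem ?_ hc, by
        exact (show ∀ a b' d e : (ZMod p → Γ) ⋊[cShift p Γ] Multiplicative (ZMod p),
          a * d * (d⁻¹ * b' * d * e) = a * b' * (d * e) by intros; group) x b y c⟩
      simpa using hconj y⁻¹ (inv_mem hy) b hb
    have Kinv : ∀ {x : G}, x ∈ (P : Set G) * Pbar → x⁻¹ ∈ (P : Set G) * Pbar := by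
      rintro _ ⟨x, hx, b, hb, rfl⟩
      exact ⟨x⁻¹, inv_mem hx, x * b⁻¹ * x⁻¹, hconj x hx b⁻¹ (inv_mem hb), by
        exact (show ∀ a b' : (ZMod p → Γ) ⋊[cShift p Γ] Multiplicative (ZMod p),
          a⁻¹ * (a * b'⁻¹ * a⁻¹) = (a * b')⁻¹ by intros; group) x b⟩
    let K : Subgroup G :=
      { carrier := (P : Set G) * Pbar
        one_mem' := ⟨1, one_mem _, 1, one_mem _, one_mul 1⟩
        mul_mem' := Kmul
        inv_mem' := Kinv }
    apply Set.Subset.antisymm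
    · rintro _ ⟨x, hx, b, hb, rfl⟩
      exact mul_mem (Subgroup.mem_sup_left hx) (Subgroup.mem_sup_right hb)
    · have : P ⊔ Pbar ≤ K :=
        sup_le (fun x hx => ⟨x, hx, 1, one_mem _, mul_one x⟩)
          (fun b hb => ⟨1, one_mem _, b, hb, one_mul b⟩)
      exact this
  refine ⟨h1, h2, ?_⟩
  constructor
  rintro n hn g
  rw [Subgroup.mem_subgroupOf, Subgroup.mem_inf] at hn ⊢
  obtain ⟨hn1, hn2⟩ := hn
  have hne : ((g * n * g⁻¹ : Subgroup.normalizer (P : Set G)) : G) = ↑g * ↑n * (↑g : G)⁻¹ := rfl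
  refine ⟨?_, (g * n * g⁻¹).2⟩
  rw [hne]
  have hx : (n : G) ∈ (P : Set G) * Pbar := by rw [h2]; exact hn1
  obtain ⟨x, hx, b, hb, hxb⟩ := hx
  have hsplit : (g : G) * ↑n * (↑g : G)⁻¹ =
      ((g : G) * x * (g : G)⁻¹) * ((g : G) * b * (g : G)⁻¹) := by
    rw [← hxb]; group
  rw [hsplit]
  exact mul_mem
    (Subgroup.mem_sup_left ((Subgroup.mem_normalizer_iff.mp g.2 x).mp hx))
    (Subgroup.mem_sup_right ((Subgroup.mem_normalizer_iff.mp (h1 g.2) b).mp hb))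
end
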